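/- arXiv:2407.04786 — 3 statements merged into one kernel-verified Lean document; each statement's English description precedes it below -/
import Mathlib

section
/- Let n ≥ 3 be an integer. There exists a constant C₁ ≥ 1 depending only on n (one may take C₁ = 1 + Σ_{k=1}^{n−1} binom(n,k)·(k/n)·(2·7ⁿ·n^{n+1})^{n/k}) such that the following holds. Let (X, μ) be a measure space, S ⊆ X a measurable set, and V > 0 a real number with μ(S) ≤ (1 − 7^{−n})·V. Then for every measurable function f : X → [0, ∞) one has ∫_S (1 + f)ⁿ dμ ≤ (1 − 7^{−n}/2)·V + C₁·∫_S fⁿ dμ. -/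
open MeasureTheory Finset
open scoped ENNReal NNReal

lemma young_pt (n k : ℕ) (hk1 : 1 ≤ k) (hkn : k < n) (A : ℝ) (hAn : (n:ℝ) ≤ A)
    (a : ℝ≥0∞) :
    a ^ k ≤ ENNReal.ofReal ((k:ℝ)/n * A ^ ((n:ℝ)/k)) * a ^ n + ENNReal.ofReal A⁻¹ := by
  have hn1 : (1:ℝ) ≤ (n:ℝ) := by exact_mod_cast Nat.one_le_of_lt hkn
  have hA1 : (1:ℝ) ≤ A := le_trans hn1 hAn
  have hApos : (0:ℝ) < A := lt_of_lt_of_le one_pos hA1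
  have hk0 : (k:ℝ) ≠ 0 := by positivity
  set θ : ℝ := A ^ (-(1:ℝ)/k) with hθdef
  have hθpos : 0 < θ := Real.rpow_pos_of_pos hApos _
  have hθk : θ ^ k = A⁻¹ := by
    rw [hθdef, ← Real.rpow_natCast (A ^ (-(1:ℝ)/k)) k, ← Real.rpow_mul hApos.le]
    rw [show (-(1:ℝ)/k) * k = -1 by field_simp, Real.rpow_neg_one]
  rcases le_or_gt a (ENNReal.ofReal θ) with h | h
  · calc a ^ k ≤ (ENNReal.ofReal θ) ^ k := pow_le_pow_left' h k
      _ = ENNReal.ofReal (θ ^ k) := (ENNReal.ofReal_pow hθpos.le k).symm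
      _ = ENNReal.ofReal A⁻¹ := by rw [hθk]
      _ ≤ _ := le_add_self
  · have hθnk : A ^ ((n:ℝ)/k) * θ ^ (n - k) = A := by
      rw [hθdef, ← Real.rpow_natCast (A ^ (-(1:ℝ)/k)) (n-k), ← Real.rpow_mul hApos.le,
        ← Real.rpow_add hApos]
      rw [show ((n:ℝ)/k + (-(1:ℝ)/k) * ((n-k:ℕ):ℝ)) = 1 by
        rw [Nat.cast_sub hkn.le]; field_simp; ring, Real.rpow_one]
    have key : (1:ℝ≥0∞) ≤ ENNReal.ofReal ((k:ℝ)/n * A ^ ((n:ℝ)/k)) *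
        ENNReal.ofReal (θ ^ (n - k)) := by
      rw [← ENNReal.ofReal_mul (by positivity), ← ENNReal.ofReal_one]
      apply ENNReal.ofReal_le_ofReal
      have h1 : (k:ℝ)/n * A ^ ((n:ℝ)/k) * θ ^ (n-k) = (k:ℝ)/n * A := by
        rw [mul_assoc, hθnk]
      rw [h1]
      rw [div_mul_eq_mul_div, le_div_iff₀ (by linarith), one_mul]
      calc (n:ℝ) ≤ A := hAn
        _ = 1 * A := (one_mul A).symm
        _ ≤ (k:ℝ) * A := by
          apply mul_le_mul_of_nonneg_right _ hApos.le
          exact_mod_cast hk1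
    calc a ^ k = 1 * a ^ k := (one_mul _).symm
      _ ≤ (ENNReal.ofReal ((k:ℝ)/n * A ^ ((n:ℝ)/k)) * ENNReal.ofReal (θ ^ (n-k))) * a ^ k :=
        mul_le_mul_left key _
      _ = ENNReal.ofReal ((k:ℝ)/n * A ^ ((n:ℝ)/k)) * (ENNReal.ofReal (θ ^ (n-k)) * a ^ k) := by
        ring
      _ ≤ ENNReal.ofReal ((k:ℝ)/n * A ^ ((n:ℝ)/k)) * (a ^ (n-k) * a ^ k) := by
        gcongr
        calc ENNReal.ofReal (θ ^ (n-k)) = (ENNReal.ofReal θ) ^ (n-k) :=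
            ENNReal.ofReal_pow hθpos.le _
          _ ≤ a ^ (n-k) := pow_le_pow_left' h.le _
      _ = ENNReal.ofReal ((k:ℝ)/n * A ^ ((n:ℝ)/k)) * a ^ n := by
        rw [← pow_add, Nat.sub_add_cancel hkn.le]
      _ ≤ _ := le_self_add

/-- Measure-theoretic binomial/Hölder/Young claim from the proof of the
"Sobolev from volume" lemma. With the explicit constant
`C₁ = 1 + ∑_{k=1}^{n-1} binom(n,k) (k/n) (2·7ⁿ·n^{n+1})^{n/k}` (which is ≥ 1),
if `μ S ≤ (1 - 7^{-n}) V` then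
`∫_S (1+f)ⁿ dμ ≤ (1 - 7^{-n}/2) V + C₁ ∫_S fⁿ dμ`. -/
theorem stmt_0 (n : ℕ) (hn : 3 ≤ n)
    {X : Type*} [MeasurableSpace X] (μ : Measure X)
    (S : Set X) (hS : MeasurableSet S)
    (V : ℝ) (hV : 0 < V)
    (hμS : μ S ≤ ENNReal.ofReal ((1 - ((7 : ℝ) ^ n)⁻¹) * V))
    (f : X → ℝ≥0∞) (hf : Measurable f) :
    (1 : ℝ) ≤ 1 + ∑ k ∈ Finset.Icc 1 (n - 1),
        (n.choose k : ℝ) * ((k : ℝ) / n) *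
          ((2 * 7 ^ n * (n : ℝ) ^ (n + 1)) ^ ((n : ℝ) / k)) ∧
    ∫⁻ x in S, (1 + f x) ^ n ∂μ ≤
      ENNReal.ofReal ((1 - ((7 : ℝ) ^ n)⁻¹ / 2) * V) +
        ENNReal.ofReal (1 + ∑ k ∈ Finset.Icc 1 (n - 1),
            (n.choose k : ℝ) * ((k : ℝ) / n) *
              ((2 * 7 ^ n * (n : ℝ) ^ (n + 1)) ^ ((n : ℝ) / k))) *
          ∫⁻ x in S, (f x) ^ n ∂μ := by
  set A : ℝ := 2 * 7 ^ n * (n : ℝ) ^ (n + 1) with hAdef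
  have hn1 : (1:ℝ) ≤ (n:ℝ) := by exact_mod_cast le_trans (by norm_num) hn
  have h7 : (0:ℝ) < 7 ^ n := by positivity
  have h17 : (1:ℝ) ≤ 7 ^ n := one_le_pow₀ (by norm_num)
  have hAn : (n:ℝ) ≤ A := by
    have h2 : (n:ℝ) ≤ (n:ℝ) ^ (n+1) := le_self_pow₀ (by linarith) (by omega)
    have h3 : (0:ℝ) ≤ (n:ℝ) ^ (n+1) := by positivity
    rw [hAdef]; nlinarith
  have hApos : (0:ℝ) < A := lt_of_lt_of_le (by linarith) hAn
  have hcnonneg : ∀ k ∈ Finset.Icc 1 (n-1), (0:ℝ) ≤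
      (n.choose k : ℝ) * ((k : ℝ) / n * A ^ ((n : ℝ) / k)) := by
    intro k _
    have : (0:ℝ) ≤ A ^ ((n:ℝ)/k) := Real.rpow_nonneg hApos.le _
    positivity
  -- rewrite statement constant into the (choose) * (c k) shape
  have hshape : ∀ k, (n.choose k : ℝ) * ((k : ℝ) / n) * (A ^ ((n : ℝ) / k))
      = (n.choose k : ℝ) * ((k : ℝ) / n * A ^ ((n : ℝ) / k)) := fun k => by ring
  constructor
  · have : (0:ℝ) ≤ ∑ k ∈ Finset.Icc 1 (n-1),
        (n.choose k : ℝ) * ((k : ℝ) / n) * (A ^ ((n : ℝ) / k)) := by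
      apply Finset.sum_nonneg
      intro k hk; rw [hshape k]; exact hcnonneg k hk
    linarith
  -- main inequality
  have hint : ∀ k ∈ Finset.Icc 1 (n-1), ∫⁻ x in S, (f x) ^ k ∂μ ≤
      ENNReal.ofReal ((k:ℝ)/n * A ^ ((n:ℝ)/k)) * ∫⁻ x in S, (f x) ^ n ∂μ +
        ENNReal.ofReal A⁻¹ * μ S := by
    intro k hk
    obtain ⟨hk1, hk2⟩ := Finset.mem_Icc.mp hk
    have hkn : k < n := by omega
    calc ∫⁻ x in S, (f x) ^ k ∂μ
        ≤ ∫⁻ x in S, (ENNReal.ofReal ((k:ℝ)/n * A ^ ((n:ℝ)/k)) * (f x) ^ n +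
            ENNReal.ofReal A⁻¹) ∂μ := by
          apply lintegral_mono
          intro x
          exact young_pt n k hk1 hkn A hAn (f x)
      _ = ENNReal.ofReal ((k:ℝ)/n * A ^ ((n:ℝ)/k)) * ∫⁻ x in S, (f x) ^ n ∂μ +
            ENNReal.ofReal A⁻¹ * μ S := by
          rw [lintegral_add_right _ measurable_const,
            lintegral_const_mul _ (hf.pow_const n)]
          congr 1
          rw [setLIntegral_const]
  have hbin : ∀ x, (1 + f x) ^ n =
      ∑ k ∈ Finset.range (n+1), (f x) ^ k * (n.choose k : ℝ≥0∞) := by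
    intro x
    rw [add_comm, add_pow]
    simp
  have hre : Finset.range (n+1) = insert 0 (insert n (Finset.Icc 1 (n-1))) := by
    ext x; simp only [Finset.mem_range, Finset.mem_insert, Finset.mem_Icc]; omega
  have hsplit : ∫⁻ x in S, (1 + f x) ^ n ∂μ =
      μ S + (∫⁻ x in S, (f x) ^ n ∂μ) +
        ∑ k ∈ Finset.Icc 1 (n-1), (∫⁻ x in S, (f x) ^ k ∂μ) * (n.choose k : ℝ≥0∞) := by
    simp_rw [hbin]
    rw [lintegral_finset_sum _ (fun k _ => (hf.pow_const k).mul_const _)]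
    rw [hre, Finset.sum_insert (by simp only [Finset.mem_insert, Finset.mem_Icc]; omega),
      Finset.sum_insert (by simp only [Finset.mem_Icc]; omega)]
    simp only [pow_zero, one_mul, Nat.choose_zero_right, Nat.choose_self, Nat.cast_one,
      mul_one]
    rw [setLIntegral_one,
      Finset.sum_congr rfl (fun k (_ : k ∈ Finset.Icc 1 (n-1)) =>
        lintegral_mul_const ((n.choose k : ℝ≥0∞)) (hf.pow_const k))]
    ring
  rw [hsplit]
  set I := ∫⁻ x in S, (f x) ^ n ∂μ with hI
  set m := μ S with hm
  -- step 1: apply hint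
  have step1 : m + I + ∑ k ∈ Finset.Icc 1 (n-1),
        (∫⁻ x in S, (f x) ^ k ∂μ) * (n.choose k : ℝ≥0∞) ≤
      m + I + ∑ k ∈ Finset.Icc 1 (n-1),
        (ENNReal.ofReal ((k:ℝ)/n * A ^ ((n:ℝ)/k)) * I + ENNReal.ofReal A⁻¹ * m) *
          (n.choose k : ℝ≥0∞) := by
    gcongr with k hk
    exact hint k hk
  refine le_trans step1 ?_
  have expand : m + I + ∑ k ∈ Finset.Icc 1 (n-1),
        (ENNReal.ofReal ((k:ℝ)/n * A ^ ((n:ℝ)/k)) * I + ENNReal.ofReal A⁻¹ * m) *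
          (n.choose k : ℝ≥0∞)
      = (1 + ∑ k ∈ Finset.Icc 1 (n-1), (n.choose k : ℝ≥0∞) * ENNReal.ofReal A⁻¹) * m +
        (1 + ∑ k ∈ Finset.Icc 1 (n-1),
          (n.choose k : ℝ≥0∞) * ENNReal.ofReal ((k:ℝ)/n * A ^ ((n:ℝ)/k))) * I := by
    have hterm : ∀ k ∈ Finset.Icc 1 (n-1),
        (ENNReal.ofReal ((k:ℝ)/n * A ^ ((n:ℝ)/k)) * I + ENNReal.ofReal A⁻¹ * m) *
          (n.choose k : ℝ≥0∞)
        = (n.choose k : ℝ≥0∞) * ENNReal.ofReal ((k:ℝ)/n * A ^ ((n:ℝ)/k)) * I +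
          (n.choose k : ℝ≥0∞) * ENNReal.ofReal A⁻¹ * m := fun k _ => by ring
    rw [Finset.sum_congr rfl hterm, Finset.sum_add_distrib, ← Finset.sum_mul,
      ← Finset.sum_mul]
    ring
  rw [expand]
  apply add_le_add
  · -- measure part
    have hCsum : ∑ k ∈ Finset.Icc 1 (n-1), (n.choose k : ℝ) ≤ 2 ^ n := by
      calc ∑ k ∈ Finset.Icc 1 (n-1), (n.choose k : ℝ)
          ≤ ∑ k ∈ Finset.range (n+1), (n.choose k : ℝ) := by
            apply Finset.sum_le_sum_of_subset_of_nonneg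
            · intro x hx
              simp only [Finset.mem_Icc] at hx
              simp only [Finset.mem_range]; omega
            · intro i _ _; positivity
        _ = 2 ^ n := by exact_mod_cast Nat.sum_range_choose n
    have h2n : (2:ℝ) ^ n ≤ (n:ℝ) ^ (n+1) := by
      calc (2:ℝ) ^ n ≤ (n:ℝ) ^ n := by
            apply pow_le_pow_left₀ (by norm_num)
            exact_mod_cast le_trans (by norm_num) hn
        _ ≤ (n:ℝ) ^ (n+1) := pow_le_pow_right₀ hn1 (Nat.le_succ n)
    have hsA : (2:ℝ) ^ n * A⁻¹ ≤ ((7:ℝ) ^ n)⁻¹ / 2 := by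
      rw [inv_eq_one_div, inv_eq_one_div, mul_one_div, div_div]
      rw [div_le_div_iff₀ hApos (by positivity)]
      have := mul_le_mul_of_nonneg_left h2n (by positivity : (0:ℝ) ≤ 2 * 7 ^ n)
      rw [hAdef]; nlinarith
    have hcoef : (1:ℝ≥0∞) + ∑ k ∈ Finset.Icc 1 (n-1),
        (n.choose k : ℝ≥0∞) * ENNReal.ofReal A⁻¹
        = ENNReal.ofReal (1 + (∑ k ∈ Finset.Icc 1 (n-1), (n.choose k : ℝ)) * A⁻¹) := by
      rw [ENNReal.ofReal_add (by norm_num) (by positivity), ENNReal.ofReal_one]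
      congr 1
      rw [Finset.sum_mul, ENNReal.ofReal_sum_of_nonneg (fun k _ => by positivity)]
      exact Finset.sum_congr rfl fun k _ => by
        rw [ENNReal.ofReal_mul (by positivity), ENNReal.ofReal_natCast]
    rw [hcoef]
    calc ENNReal.ofReal (1 + (∑ k ∈ Finset.Icc 1 (n-1), (n.choose k : ℝ)) * A⁻¹) * m
        ≤ ENNReal.ofReal (1 + (∑ k ∈ Finset.Icc 1 (n-1), (n.choose k : ℝ)) * A⁻¹) *
            ENNReal.ofReal ((1 - ((7:ℝ) ^ n)⁻¹) * V) := by gcongr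
      _ = ENNReal.ofReal ((1 + (∑ k ∈ Finset.Icc 1 (n-1), (n.choose k : ℝ)) * A⁻¹) *
            ((1 - ((7:ℝ) ^ n)⁻¹) * V)) := by
          rw [← ENNReal.ofReal_mul (by positivity)]
      _ ≤ ENNReal.ofReal ((1 - ((7:ℝ) ^ n)⁻¹ / 2) * V) := by
          apply ENNReal.ofReal_le_ofReal
          have hsmall : (∑ k ∈ Finset.Icc 1 (n-1), (n.choose k : ℝ)) * A⁻¹ ≤
              ((7:ℝ) ^ n)⁻¹ / 2 := by
            refine le_trans ?_ hsA
            apply mul_le_mul_of_nonneg_right hCsum (by positivity)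
          have he1 : ((7:ℝ) ^ n)⁻¹ ≤ 1 := by
            rw [inv_le_one_iff₀]; right; exact h17
          have hs0 : (0:ℝ) ≤ (∑ k ∈ Finset.Icc 1 (n-1), (n.choose k : ℝ)) * A⁻¹ := by
            positivity
          nlinarith [mul_le_mul_of_nonneg_right hsmall hV.le,
            mul_nonneg (mul_nonneg hs0 (by positivity : (0:ℝ) ≤ ((7:ℝ)^n)⁻¹)) hV.le]
  · -- integral part
    apply mul_le_mul_left
    have : ENNReal.ofReal (1 + ∑ k ∈ Finset.Icc 1 (n-1),
        (n.choose k : ℝ) * ((k : ℝ) / n) * (A ^ ((n : ℝ) / k)))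
        = 1 + ∑ k ∈ Finset.Icc 1 (n-1),
            (n.choose k : ℝ≥0∞) * ENNReal.ofReal ((k:ℝ)/n * A ^ ((n:ℝ)/k)) := by
      rw [ENNReal.ofReal_add (by norm_num)
        (Finset.sum_nonneg fun k hk => by rw [hshape k]; exact hcnonneg k hk),
        ENNReal.ofReal_one]
      congr 1
      rw [ENNReal.ofReal_sum_of_nonneg (fun k hk => by rw [hshape k]; exact hcnonneg k hk)]
      exact Finset.sum_congr rfl fun k hk => by
        rw [hshape k, ENNReal.ofReal_mul (by positivity), ENNReal.ofReal_natCast]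
    rw [this]
end

section
/- Let n ≥ 3 be an integer, Ω ⊆ ℝⁿ an open set, A > 0 and B ≥ 0 real numbers, and suppose the Sobolev inequality Sob(Ω) ≤ [A, B] holds. Then for every nonnegative smooth compactly supported u with support in Ω satisfying ∫ u² dx = 1, one has the entropy bound ∫ u² log(u²) dx ≤ (n/2)·log( A·∫ (|∇u|² + B·u²) dx ), where u² log(u²) is interpreted as 0 wherever u = 0. -/
open MeasureTheory

/-- If the Sobolev inequality `Sob(Ω) ≤ [A, B]` holds on an open set
`Ω ⊆ ℝⁿ`, then every nonnegative smooth compactly supported `u` with support in `Ω`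
and `∫ u² = 1` satisfies the log-entropy bound
`∫ u² log(u²) ≤ (n/2) log(A ∫ (|∇u|² + B u²))`.
(Here `Real.log 0 = 0`, so `u² log u²` vanishes where `u = 0`.) -/
theorem stmt_2 (n : ℕ) (hn : 3 ≤ n)
    (Ω : Set (EuclideanSpace ℝ (Fin n))) (hΩ : IsOpen Ω)
    (A B : ℝ) (hA : 0 < A) (hB : 0 ≤ B)
    (hSob : ∀ u : EuclideanSpace ℝ (Fin n) → ℝ,
      ContDiff ℝ (⊤ : ℕ∞) u → HasCompactSupport u → tsupport u ⊆ Ω →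
      (∫ x, |u x| ^ ((2 * (n : ℝ)) / ((n : ℝ) - 2))) ^ (((n : ℝ) - 2) / n) ≤
        A * ∫ x, (‖fderiv ℝ u x‖ ^ 2 + B * u x ^ 2)) :
    ∀ u : EuclideanSpace ℝ (Fin n) → ℝ,
      ContDiff ℝ (⊤ : ℕ∞) u → HasCompactSupport u → tsupport u ⊆ Ω →
      (∀ x, 0 ≤ u x) → (∫ x, u x ^ 2) = 1 →
      ∫ x, u x ^ 2 * Real.log (u x ^ 2) ≤
        ((n : ℝ) / 2) * Real.log (A * ∫ x, (‖fderiv ℝ u x‖ ^ 2 + B * u x ^ 2)) := by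
  intro u hu hcs hsupp hpos hint1
  have hn2 : (2 : ℝ) < (n : ℝ) := by
    have : (3 : ℝ) ≤ (n : ℝ) := by exact_mod_cast hn
    linarith
  have hn2' : (0 : ℝ) < (n : ℝ) - 2 := by linarith
  have hnpos : (0 : ℝ) < (n : ℝ) := by linarith
  set p : ℝ := 2 * (n : ℝ) / ((n : ℝ) - 2) with hp_def
  have hp_pos : 0 < p := by positivity
  have hp_ne : p ≠ 0 := ne_of_gt hp_pos
  have hp2 : p - 2 = 4 / ((n : ℝ) - 2) := by
    field_simp [hp_def]
    have h : p * ((n : ℝ) - 2) = 2 * n := by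
      rw [hp_def]; exact div_mul_cancel₀ _ (ne_of_gt hn2')
    linear_combination h
  have hp2_pos : 0 < p - 2 := by rw [hp2]; positivity
  have hu_cont : Continuous u := hu.continuous
  -- continuity/integrability facts
  have hsq_cont : Continuous (fun x => u x ^ 2) := hu_cont.pow 2
  have hsq_cs : HasCompactSupport (fun x => u x ^ 2) := by
    have : HasCompactSupport ((fun t : ℝ => t ^ 2) ∘ u) :=
      HasCompactSupport.comp_left hcs (by simp)
    exact this
  have hI2 : Integrable (fun x => u x ^ 2) := hsq_cont.integrable_of_hasCompactSupport hsq_cs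
  have hrp_cont : Continuous (fun x => u x ^ p) :=
    (Real.continuous_rpow_const hp_pos.le).comp hu_cont
  have hrp_cs : HasCompactSupport (fun x => u x ^ p) := by
    have : HasCompactSupport ((fun t : ℝ => t ^ p) ∘ u) :=
      HasCompactSupport.comp_left hcs (by simp [Real.zero_rpow hp_ne])
    exact this
  have hIp : Integrable (fun x => u x ^ p) := hrp_cont.integrable_of_hasCompactSupport hrp_cs
  have hlog_cont : Continuous (fun x => u x ^ 2 * Real.log (u x ^ 2)) := by
    have h := Real.continuous_mul_log.comp hsq_cont
    simpa only [Function.comp_def] using h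
  have hlog_cs : HasCompactSupport (fun x => u x ^ 2 * Real.log (u x ^ 2)) := by
    have h : HasCompactSupport ((fun t : ℝ => t * Real.log t) ∘ (fun x => u x ^ 2)) :=
      HasCompactSupport.comp_left hsq_cs (by simp)
    simpa only [Function.comp_def] using h
  have hIlog : Integrable (fun x => u x ^ 2 * Real.log (u x ^ 2)) :=
    hlog_cont.integrable_of_hasCompactSupport hlog_cs
  -- c = ∫ u^p > 0
  set c : ℝ := ∫ x, u x ^ p with hc_def
  have hne : ∃ x, u x ≠ 0 := by
    by_contra h
    push_neg at h
    rw [show (fun x => u x ^ 2) = fun _ => (0:ℝ) by funext x; rw [h x]; ring] at hint1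
    simp at hint1
  have hsupp_eq : Function.support (fun x => u x ^ p) = Function.support u := by
    ext x
    simp only [Function.mem_support]
    exact not_congr (Real.rpow_eq_zero (hpos x) hp_ne)
  have hc_pos : 0 < c := by
    rw [hc_def, integral_pos_iff_support_of_nonneg
      (fun x => Real.rpow_nonneg (hpos x) p) hIp, hsupp_eq]
    exact (hu_cont.isOpen_support).measure_pos volume
      (Function.support_nonempty_iff.mpr (by
        obtain ⟨x, hx⟩ := hne
        intro h; exact hx (congrFun h x)))
  -- pointwise inequality
  have key : ∀ x, u x ^ 2 * Real.log (u x ^ 2) ≤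
      (((n : ℝ) - 2) / 2) * (u x ^ p / c - u x ^ 2 + u x ^ 2 * Real.log c) := by
    intro x
    rcases eq_or_lt_of_le (hpos x) with h0 | ht
    · rw [← h0]
      simp [Real.zero_rpow hp_ne]
    · set t := u x with ht_def
      have h1 : Real.log (t ^ (p - 2)) ≤ t ^ (p - 2) / c - 1 + Real.log c := by
        have hrp : 0 < t ^ (p - 2) := Real.rpow_pos_of_pos ht _
        have := Real.log_le_sub_one_of_pos (div_pos hrp hc_pos)
        rw [Real.log_div (ne_of_gt hrp) (ne_of_gt hc_pos)] at this
        linarith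
      have hlogt2 : Real.log (t ^ 2) = 2 * Real.log t := by
        rw [← Real.rpow_two, Real.log_rpow ht]
      have hlogtp : Real.log (t ^ (p - 2)) = (p - 2) * Real.log t := Real.log_rpow ht _
      have htp : t ^ p = t ^ 2 * t ^ (p - 2) := by
        rw [← Real.rpow_two, ← Real.rpow_add ht]
        norm_num
      have hmul : t ^ 2 * Real.log (t ^ (p - 2)) ≤
          t ^ 2 * (t ^ (p - 2) / c - 1 + Real.log c) :=
        mul_le_mul_of_nonneg_left h1 (sq_nonneg t)
      have hcoef : (((n : ℝ) - 2) / 2) * (p - 2) = 2 := by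
        rw [hp2]; field_simp; ring
      calc t ^ 2 * Real.log (t ^ 2)
          = (((n : ℝ) - 2) / 2) * (t ^ 2 * Real.log (t ^ (p - 2))) := by
            rw [hlogt2, hlogtp]; linear_combination (t^2 * Real.log t) * hcoef.symm
        _ ≤ (((n : ℝ) - 2) / 2) * (t ^ 2 * (t ^ (p - 2) / c - 1 + Real.log c)) := by
            apply mul_le_mul_of_nonneg_left hmul; positivity
        _ = (((n : ℝ) - 2) / 2) * (t ^ p / c - t ^ 2 + t ^ 2 * Real.log c) := by
            rw [htp]; ring
  -- integrate
  have hIrhs : Integrable (fun x =>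
      (((n : ℝ) - 2) / 2) * (u x ^ p / c - u x ^ 2 + u x ^ 2 * Real.log c)) := by
    apply Integrable.const_mul
    exact ((hIp.div_const c).sub hI2).add (hI2.mul_const _)
  have hint_le : ∫ x, u x ^ 2 * Real.log (u x ^ 2) ≤
      ∫ x, (((n : ℝ) - 2) / 2) * (u x ^ p / c - u x ^ 2 + u x ^ 2 * Real.log c) :=
    integral_mono hIlog hIrhs key
  have hrhs_eq : ∫ x, (((n : ℝ) - 2) / 2) * (u x ^ p / c - u x ^ 2 + u x ^ 2 * Real.log c)
      = (((n : ℝ) - 2) / 2) * Real.log c := by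
    have hIa : Integrable (fun x => u x ^ p / c - u x ^ 2) := (hIp.div_const c).sub hI2
    have hIb : Integrable (fun x => u x ^ 2 * Real.log c) := hI2.mul_const _
    have hIc : Integrable (fun x => u x ^ p / c) := hIp.div_const c
    rw [integral_const_mul, integral_add hIa hIb,
      integral_sub hIc hI2, integral_div, integral_mul_const, ← hc_def, hint1]
    rw [div_self (ne_of_gt hc_pos)]
    ring
  -- Sobolev step
  set E : ℝ := ∫ x, (‖fderiv ℝ u x‖ ^ 2 + B * u x ^ 2) with hE_def
  have hSob' : c ^ (((n : ℝ) - 2) / n) ≤ A * E := by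
    have := hSob u hu hcs hsupp
    rw [show (fun x => |u x| ^ ((2 * (n : ℝ)) / ((n : ℝ) - 2))) = fun x => u x ^ p by
      funext x; rw [abs_of_nonneg (hpos x)]] at this
    exact this
  have hlog1 : (((n : ℝ) - 2) / n) * Real.log c ≤ Real.log (A * E) := by
    rw [← Real.log_rpow hc_pos]
    exact Real.log_le_log (Real.rpow_pos_of_pos hc_pos _) hSob'
  have hfinal : (((n : ℝ) - 2) / 2) * Real.log c ≤ ((n : ℝ) / 2) * Real.log (A * E) := by
    have := mul_le_mul_of_nonneg_left hlog1 (by positivity : (0:ℝ) ≤ (n : ℝ) / 2)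
    calc (((n : ℝ) - 2) / 2) * Real.log c
        = ((n : ℝ) / 2) * ((((n : ℝ) - 2) / n) * Real.log c) := by
          field_simp
      _ ≤ ((n : ℝ) / 2) * Real.log (A * E) := this
  calc ∫ x, u x ^ 2 * Real.log (u x ^ 2)
      ≤ (((n : ℝ) - 2) / 2) * Real.log c := by rw [← hrhs_eq]; exact hint_le
    _ ≤ ((n : ℝ) / 2) * Real.log (A * E) := hfinal
end

section
/- For every integer n ≥ 4, letting ωₙ denote the Lebesgue volume of the unit ball in ℝⁿ, the following numerical inequality holds: (ωₙ/8) · ( 8·( 2^{3n+9} · (32·(10n)^{3n})^{n/2} · (2^{n+4}·1000n)^{n/2} )^{2n+1} )^{−1} · ( 10⁷·n³·32·(10n)^{3n} )^{−n/2} ≥ (10n)^{−10n³}. -/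
open MeasureTheory

/-- If `a ^ q ≤ t ^ p` then `a ≤ t ^ (p/q)`. -/
lemma aux_root_le (t a : ℝ) (ht : 0 ≤ t) (ha : 0 ≤ a) (p q : ℕ) (hq : 0 < q)
    (h : a ^ q ≤ t ^ p) : a ≤ t ^ ((p : ℝ) / q) := by
  have hq' : ((q : ℝ)) ≠ 0 := by positivity
  have h1 : a = (a ^ q) ^ ((q : ℝ)⁻¹) := by
    rw [← Real.rpow_natCast a q, ← Real.rpow_mul ha, mul_inv_cancel₀ hq', Real.rpow_one]
  rw [h1]
  calc (a ^ q) ^ ((q:ℝ)⁻¹) ≤ (t ^ p) ^ ((q:ℝ)⁻¹) :=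
        Real.rpow_le_rpow (by positivity) h (by positivity)
    _ = t ^ ((p : ℝ) / q) := by
        rw [← Real.rpow_natCast t p, ← Real.rpow_mul ht]
        ring_nf

lemma aux_pow_le_t (t a e : ℝ) (ht : 0 ≤ t) (ha : 0 ≤ a) (h : a ≤ t ^ e) (k : ℕ) :
    a ^ k ≤ t ^ (e * k) := by
  calc a ^ k ≤ (t ^ e) ^ k := pow_le_pow_left₀ ha h k
    _ = t ^ (e * k) := by rw [← Real.rpow_natCast (t ^ e) k, ← Real.rpow_mul ht]

lemma aux_rpow_le_t (t a e c : ℝ) (ht : 0 ≤ t) (ha : 0 ≤ a) (hc : 0 ≤ c) (h : a ≤ t ^ e) :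
    a ^ c ≤ t ^ (e * c) := by
  calc a ^ c ≤ (t ^ e) ^ c := Real.rpow_le_rpow ha h hc
    _ = t ^ (e * c) := by rw [← Real.rpow_mul ht]

open Real in
lemma aux_omega_ge (n : ℕ) (hn : 4 ≤ n) :
    (10 * (n:ℝ)) ^ (-(n:ℝ)) ≤
      (volume (Metric.ball (0 : EuclideanSpace ℝ (Fin n)) 1)).toReal := by
  haveI : NeZero n := ⟨by omega⟩
  have hn4 : (4:ℝ) ≤ (n:ℝ) := by exact_mod_cast hn
  have hΓpos : 0 < Real.Gamma ((n:ℝ) / 2 + 1) := Real.Gamma_pos_of_pos (by positivity)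
  rw [EuclideanSpace.volume_ball, Fintype.card_fin, ENNReal.ofReal_one, one_pow, one_mul,
    ENNReal.toReal_ofReal (by positivity)]
  have hΓ : Real.Gamma ((n:ℝ) / 2 + 1) ≤ (n:ℝ) ^ n := by
    have h1 : Real.Gamma ((n:ℝ) / 2 + 1) ≤ Real.Gamma ((n:ℝ) + 1) := by
      apply Real.Gamma_strictMonoOn_Ici.monotoneOn
      · simp only [Set.mem_Ici]; linarith
      · simp only [Set.mem_Ici]; linarith
      · linarith
    have h2 : Real.Gamma ((n:ℝ) + 1) = (n.factorial : ℝ) := by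
      exact_mod_cast Real.Gamma_nat_eq_factorial n
    have h3 : (n.factorial : ℝ) ≤ (n:ℝ) ^ n := by exact_mod_cast n.factorial_le_pow
    linarith
  have hπ : (1:ℝ) ≤ Real.sqrt π ^ n := one_le_pow₀ (by
    rw [show (1:ℝ) = Real.sqrt 1 by simp]
    exact Real.sqrt_le_sqrt (by linarith [Real.pi_gt_three]))
  have key : (10 * (n:ℝ)) ^ (-(n:ℝ)) ≤ 1 / (n:ℝ) ^ n := by
    rw [Real.rpow_neg (by positivity), one_div, Real.rpow_natCast (10 * (n:ℝ)) n]
    apply inv_anti₀ (by positivity)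
    exact pow_le_pow_left₀ (by positivity) (by linarith) n
  calc (10 * (n:ℝ)) ^ (-(n:ℝ)) ≤ 1 / (n:ℝ) ^ n := key
    _ ≤ Real.sqrt π ^ n / Real.Gamma ((n:ℝ)/2 + 1) := by
        gcongr

set_option maxHeartbeats 2000000 in
/-- The explicit lower bound `ε(n) ≥ (10n)^{-10n³}` for the gap
constant of the main theorem, where `ωₙ` is the Lebesgue volume of the unit ball
in `ℝⁿ`. -/
theorem stmt_6 (n : ℕ) (hn : 4 ≤ n) :
    ((volume (Metric.ball (0 : EuclideanSpace ℝ (Fin n)) 1)).toReal / 8) *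
      (8 * ((2 : ℝ) ^ (3 * n + 9) *
            (32 * (10 * (n : ℝ)) ^ (3 * n)) ^ ((n : ℝ) / 2) *
            ((2 : ℝ) ^ (n + 4) * 1000 * (n : ℝ)) ^ ((n : ℝ) / 2)) ^ (2 * n + 1))⁻¹ *
      ((10 : ℝ) ^ 7 * (n : ℝ) ^ 3 * 32 * (10 * (n : ℝ)) ^ (3 * n)) ^ (-((n : ℝ) / 2)) ≥
      (10 * (n : ℝ)) ^ (-(10 * (n : ℝ) ^ 3)) := by
  have hn4 : (4:ℝ) ≤ (n:ℝ) := by exact_mod_cast hn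
  set x : ℝ := (n:ℝ) with hx
  set t : ℝ := 10 * x with htdef
  have ht40 : (40:ℝ) ≤ t := by rw [htdef]; linarith
  have ht0 : (0:ℝ) < t := by linarith
  have ht1 : (1:ℝ) ≤ t := by linarith
  -- atomic bounds
  have h2t : (2:ℝ) ≤ t ^ ((1:ℝ)/5) := by
    have := aux_root_le t 2 ht0.le (by norm_num) 1 5 (by norm_num)
      (by rw [pow_one]; nlinarith)
    simpa using this
  have h10t : (10:ℝ) ≤ t ^ ((2:ℝ)/3) := by
    apply aux_root_le t 10 ht0.le (by norm_num) 2 3 (by norm_num)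
    nlinarith
  have h100t : (100:ℝ) ≤ t ^ ((4:ℝ)/3) := by
    apply aux_root_le t 100 ht0.le (by norm_num) 4 3 (by norm_num)
    nlinarith [sq_nonneg t, sq_nonneg (t - 40)]
  have h64t : (64:ℝ) ≤ t ^ ((6:ℝ)/5) := by
    apply aux_root_le t 64 ht0.le (by norm_num) 6 5 (by norm_num)
    calc (64:ℝ) ^ 5 ≤ 40 ^ 6 := by norm_num
      _ ≤ t ^ 6 := by gcongr
  have hxt : x ≤ t ^ (1:ℝ) := by rw [Real.rpow_one]; linarith
  have h32t : (32:ℝ) ≤ t ^ (1:ℝ) := by rw [Real.rpow_one]; linarith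
  -- bound on first factor of A
  have hA1 : (2:ℝ) ^ (3*n+9) ≤ t ^ ((1:ℝ)/5 * (3*x+9)) := by
    have := aux_pow_le_t t 2 ((1:ℝ)/5) ht0.le (by norm_num) h2t (3*n+9)
    convert this using 2
    push_cast; ring
  -- bound on second factor of A
  have hA2pre : 32 * (10 * x) ^ (3*n) ≤ t ^ (3*x+1) := by
    have e1 : (3*x+1) = ((3*n+1 : ℕ) : ℝ) := by push_cast; ring
    rw [e1, Real.rpow_natCast]
    calc 32 * (10*x) ^ (3*n) ≤ t * t ^ (3*n) := by
          rw [htdef]; gcongr; linarith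
      _ = t ^ (3*n+1) := by ring
  have hA2 : (32 * (10 * x) ^ (3*n)) ^ (x/2) ≤ t ^ ((3*x+1) * (x/2)) :=
    aux_rpow_le_t t _ _ _ ht0.le (by positivity) (by positivity) hA2pre
  -- bound on third factor of A
  have hA3pre : (2:ℝ) ^ (n+4) * 1000 * x ≤ t ^ ((1:ℝ)/5 * (x+4) + 7/3) := by
    have b1 : (2:ℝ) ^ (n+4) ≤ t ^ ((1:ℝ)/5 * (x+4)) := by
      have := aux_pow_le_t t 2 ((1:ℝ)/5) ht0.le (by norm_num) h2t (n+4)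
      convert this using 2
      push_cast; ring
    have b2 : (1000:ℝ) * x ≤ t ^ ((7:ℝ)/3) := by
      have : (1000:ℝ) * x = 100 * t := by rw [htdef]; ring
      rw [this, show ((7:ℝ)/3) = (4:ℝ)/3 + 1 by norm_num, Real.rpow_add ht0,
        Real.rpow_one]
      exact mul_le_mul_of_nonneg_right h100t ht0.le
    calc (2:ℝ) ^ (n+4) * 1000 * x = (2:ℝ) ^ (n+4) * (1000 * x) := by ring
      _ ≤ t ^ ((1:ℝ)/5 * (x+4)) * t ^ ((7:ℝ)/3) :=
          mul_le_mul b1 b2 (by positivity) (by positivity)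
      _ = t ^ ((1:ℝ)/5 * (x+4) + 7/3) := (Real.rpow_add ht0 _ _).symm
  have hA3 : ((2:ℝ) ^ (n+4) * 1000 * x) ^ (x/2) ≤ t ^ (((1:ℝ)/5 * (x+4) + 7/3) * (x/2)) :=
    aux_rpow_le_t t _ _ _ ht0.le (by positivity) (by positivity) hA3pre
  -- bound on A
  set eA1 : ℝ := (1:ℝ)/5 * (3*x+9) + (3*x+1) * (x/2) + ((1:ℝ)/5 * (x+4) + 7/3) * (x/2)
    with heA1
  have hA : (2:ℝ) ^ (3*n+9) * (32 * (10 * x) ^ (3*n)) ^ (x/2) *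
      ((2:ℝ) ^ (n+4) * 1000 * x) ^ (x/2) ≤ t ^ eA1 := by
    calc (2:ℝ) ^ (3*n+9) * (32 * (10 * x) ^ (3*n)) ^ (x/2) *
        ((2:ℝ) ^ (n+4) * 1000 * x) ^ (x/2)
        ≤ t ^ ((1:ℝ)/5 * (3*x+9)) * t ^ ((3*x+1) * (x/2)) *
          t ^ (((1:ℝ)/5 * (x+4) + 7/3) * (x/2)) := by
          apply mul_le_mul (mul_le_mul hA1 hA2 (by positivity) (by positivity)) hA3
            (by positivity) (by positivity)
      _ = t ^ eA1 := by rw [heA1, Real.rpow_add ht0, Real.rpow_add ht0]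
  set eA : ℝ := eA1 * ((2*n+1 : ℕ) : ℝ) with heA
  have hApow : ((2:ℝ) ^ (3*n+9) * (32 * (10 * x) ^ (3*n)) ^ (x/2) *
      ((2:ℝ) ^ (n+4) * 1000 * x) ^ (x/2)) ^ (2*n+1) ≤ t ^ eA :=
    aux_pow_le_t t _ _ ht0.le (by positivity) hA (2*n+1)
  -- bound on B
  set eB1 : ℝ := (2:ℝ)/3 * 7 + 1 * 3 + 1 + 3 * x with heB1
  have hB : (10:ℝ) ^ 7 * x ^ 3 * 32 * (10 * x) ^ (3*n) ≤ t ^ eB1 := by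
    have b1 : (10:ℝ) ^ 7 ≤ t ^ ((2:ℝ)/3 * 7) :=
      aux_pow_le_t t 10 ((2:ℝ)/3) ht0.le (by norm_num) h10t 7 |>.trans_eq (by norm_num)
    have b2 : x ^ 3 ≤ t ^ ((1:ℝ) * 3) :=
      aux_pow_le_t t x 1 ht0.le (by positivity) hxt 3 |>.trans_eq (by norm_num)
    have b4 : (10 * x) ^ (3*n) ≤ t ^ (3 * x) := by
      have e1 : (3*x) = ((3*n : ℕ) : ℝ) := by push_cast; ring
      rw [e1, Real.rpow_natCast, htdef]
    calc (10:ℝ) ^ 7 * x ^ 3 * 32 * (10 * x) ^ (3*n)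
        ≤ t ^ ((2:ℝ)/3 * 7) * t ^ ((1:ℝ) * 3) * t ^ (1:ℝ) * t ^ (3 * x) := by
          apply mul_le_mul (mul_le_mul (mul_le_mul b1 b2 (by positivity) (by positivity))
            h32t (by norm_num) (by positivity)) b4 (by positivity) (by positivity)
      _ = t ^ eB1 := by
          rw [heB1, Real.rpow_add ht0, Real.rpow_add ht0, Real.rpow_add ht0]
  have hBn : ((10:ℝ) ^ 7 * x ^ 3 * 32 * (10 * x) ^ (3*n)) ^ (x/2) ≤ t ^ (eB1 * (x/2)) :=
    aux_rpow_le_t t _ _ _ ht0.le (by positivity) (by positivity) hB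
  have hBneg : t ^ (-(eB1 * (x/2))) ≤
      ((10:ℝ) ^ 7 * x ^ 3 * 32 * (10 * x) ^ (3*n)) ^ (-(x/2)) := by
    rw [Real.rpow_neg ht0.le, Real.rpow_neg (by positivity)]
    exact inv_anti₀ (by positivity) hBn
  -- volume bound
  have hω : t ^ (-x) ≤ (volume (Metric.ball (0 : EuclideanSpace ℝ (Fin n)) 1)).toReal := by
    have := aux_omega_ge n hn
    rwa [hx, htdef]
  -- assemble
  rw [ge_iff_le]
  have step1 : t ^ (-x) / 8 * (8 * t ^ eA)⁻¹ * t ^ (-(eB1 * (x/2))) ≤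
      (volume (Metric.ball (0 : EuclideanSpace ℝ (Fin n)) 1)).toReal / 8 *
      (8 * ((2 : ℝ) ^ (3 * n + 9) * (32 * (10 * x) ^ (3 * n)) ^ (x / 2) *
        ((2 : ℝ) ^ (n + 4) * 1000 * x) ^ (x / 2)) ^ (2 * n + 1))⁻¹ *
      ((10 : ℝ) ^ 7 * x ^ 3 * 32 * (10 * x) ^ (3 * n)) ^ (-(x / 2)) := by
    apply mul_le_mul _ hBneg (by positivity) _
    · apply mul_le_mul (by gcongr) _ (by positivity) (by positivity)
      apply inv_anti₀ (by positivity)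
      gcongr
    · positivity
  refine le_trans ?_ step1
  have step2 : t ^ (-x) / 8 * (8 * t ^ eA)⁻¹ * t ^ (-(eB1 * (x/2))) =
      64⁻¹ * t ^ (-x + -eA + -(eB1 * (x/2))) := by
    rw [Real.rpow_add ht0, Real.rpow_add ht0, Real.rpow_neg ht0.le eA, mul_inv]
    field_simp
    ring
  rw [step2]
  calc (10 * x) ^ (-(10 * x ^ 3))
      = t ^ (-(10 * x ^ 3)) := by rw [htdef]
    _ ≤ t ^ (-(6:ℝ)/5 + (-x + -eA + -(eB1 * (x/2)))) := by
        apply Real.rpow_le_rpow_of_exponent_le ht1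
        rw [heA, heA1, heB1]
        push_cast
        nlinarith [mul_nonneg (mul_nonneg (by linarith : (0:ℝ) ≤ x - 4) (by linarith : (0:ℝ) ≤ x)) (by linarith : (0:ℝ) ≤ x), mul_nonneg (by linarith : (0:ℝ) ≤ x - 4) (by linarith : (0:ℝ) ≤ x), hn4]
    _ = t ^ (-(6:ℝ)/5) * t ^ (-x + -eA + -(eB1 * (x/2))) := Real.rpow_add ht0 _ _
    _ ≤ 64⁻¹ * t ^ (-x + -eA + -(eB1 * (x/2))) := by
        apply mul_le_mul_of_nonneg_right _ (by positivity)
        rw [show (-(6:ℝ)/5) = -((6:ℝ)/5) by norm_num, Real.rpow_neg ht0.le]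
        rw [show (64:ℝ)⁻¹ = ((64:ℝ))⁻¹ from rfl]
        exact inv_anti₀ (by norm_num) h64t
end
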